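/- Let q, p be coprime integers with 0 < q < p and q + p odd (so that q/p is of the form odd/even or even/odd). Then there exist a positive integer m and nonzero integers a₁, …, a_m such that q/p = [2a₁, 2a₂, …, 2a_m]; moreover m can be chosen odd when p is even (q/p = odd/even) and even when p is odd (q/p = even/odd). [Claim used in the proof of Proposition 4 (Section 5.2): every such slope has a continued fraction expansion with all entries even] -/

import Mathlib

open Matrix

/-- The group `GL(2,ℤ)`. -/
abbrev GL2Z := Matrix.GeneralLinearGroup (Fin 2) ℤ

/-- The projective line `ℙ¹(ℚ)`. -/
abbrev P1Q := Projectivization ℚ (Fin 2 → ℚ)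

/-- The point `∞ = [1 : 0]` of `ℙ¹(ℚ)`. -/
noncomputable def infty : P1Q :=
  Projectivization.mk ℚ ![1, 0] (by
    intro h; simpa using congrFun h 0)

/-- The point `[x : 1]` of `ℙ¹(ℚ)` corresponding to the rational number `x`. -/
noncomputable def ratPt (x : ℚ) : P1Q :=
  Projectivization.mk ℚ ![x, 1] (by
    intro h; simpa using congrFun h 1)

/-- A matrix in `GL(2,ℤ)` viewed as an invertible matrix over `ℚ`. -/
def glq (M : GL2Z) : Matrix.GeneralLinearGroup (Fin 2) ℚ :=
  Matrix.GeneralLinearGroup.map (Int.castRingHom ℚ) M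

lemma glq_inj (M : GL2Z) :
    Function.Injective ((glq M).val.mulVecLin) := by
  have h : ((glq M)⁻¹).val.mulVecLin ∘ₗ (glq M).val.mulVecLin = LinearMap.id := by
    rw [← Matrix.mulVecLin_mul]
    have : ((glq M)⁻¹).val * (glq M).val = 1 := by
      rw [← Units.val_mul, inv_mul_cancel, Units.val_one]
    rw [this, Matrix.mulVecLin_one]
  intro x y hxy
  have := congrArg ((glq M)⁻¹).val.mulVecLin hxy
  calc x = (((glq M)⁻¹).val.mulVecLin ∘ₗ (glq M).val.mulVecLin) x := by rw [h]; rfl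
    _ = (((glq M)⁻¹).val.mulVecLin ∘ₗ (glq M).val.mulVecLin) y := by
        simpa using this
    _ = y := by rw [h]; rfl

/-- The action of `GL(2,ℤ)` on `ℙ¹(ℚ)` by linear fractional transformations:
`(a b; c d)` sends `[x : y]` to `[ax + by : cx + dy]`. -/
noncomputable def act (M : GL2Z) (x : P1Q) : P1Q :=
  Projectivization.map ((glq M).val.mulVecLin) (glq_inj M) x

/-- The matrix `A₁ = (-1 0; 0 1)`, acting by `x ↦ -x`. -/
def A1 : GL2Z :=
  ⟨!![-1, 0; 0, 1], !![-1, 0; 0, 1], by decide, by decide⟩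

/-- The matrix `A₂ = (-1 2; 0 1)`, acting by `x ↦ 2 - x`. -/
def A2 : GL2Z :=
  ⟨!![-1, 2; 0, 1], !![-1, 2; 0, 1], by decide, by decide⟩

/-- The group `Γ_∞`, generated by the reflections `A₁` and `A₂`. -/
def GammaInf : Subgroup GL2Z := Subgroup.closure {A1, A2}

/-- The group `Γ_r = B Γ_∞ B⁻¹`, for `B ∈ GL(2,ℤ)` with `B·∞ = r`. -/
def Gamma (B : GL2Z) : Subgroup GL2Z :=
  GammaInf.map (MulAut.conj B).toMonoidHom

/-- The group `Γ̂_r`, generated by `Γ_r ∪ Γ_∞`. -/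
def GammaHat (B : GL2Z) : Subgroup GL2Z := Gamma B ⊔ GammaInf
/-- The matrix `E(t) = (1 0; t 1)`. -/
def Emat (t : ℤ) : GL2Z :=
  ⟨!![1, 0; t, 1], !![1, 0; -t, 1],
    by simp [Matrix.mul_fin_two, Matrix.one_fin_two],
    by simp [Matrix.mul_fin_two, Matrix.one_fin_two]⟩

/-- The matrix `F(t) = (1 t; 0 1)`. -/
def Fmat (t : ℤ) : GL2Z :=
  ⟨!![1, t; 0, 1], !![1, -t; 0, 1],
    by simp [Matrix.mul_fin_two, Matrix.one_fin_two],
    by simp [Matrix.mul_fin_two, Matrix.one_fin_two]⟩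

/-- The alternating product `E(a₁) F(a₂) E(a₃) ⋯`;
the boolean records whether the next factor is an `E`. -/
def cfMatAux : Bool → List ℤ → GL2Z
  | _, [] => 1
  | true, t :: l => Emat t * cfMatAux false l
  | false, t :: l => Fmat t * cfMatAux true l

/-- The matrix `E(a₁) F(a₂) E(a₃) ⋯` associated to a continued fraction. -/
def cfMat (l : List ℤ) : GL2Z := cfMatAux true l

/-- The continued fraction value `[a₁, …, a_m] ∈ ℙ¹(ℚ)`: the image of `∞`
(if `m` is odd) resp. of `0` (if `m` is even) under `E(a₁) F(a₂) E(a₃) ⋯`. -/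
noncomputable def cfVal (l : List ℤ) : P1Q :=
  act (cfMat l) (if Odd l.length then infty else ratPt 0)

/-!
Euclid's algorithm with even quotients. For coprime `q, p` with `|q| < |p|` and `q + p` odd,
pick `a` with `|p - 2aq| ≤ |q|`. Then `r = p - 2aq` satisfies `r + q ≡ q + p` (mod 2), which
rules out `|r| = |q|`, so `(r, q)` is again such a pair, and `q/p = 1/(2a + r/q)`.
Iterating ends at `0/±1`, the empty continued fraction; since `q + p` is odd, every step
flips the parity of the denominator, which gives the parity of the length.
-/

@[simp]
lemma glq_apply (M : GL2Z) (i j : Fin 2) : (glq M).val i j = M.val i j := rfl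

lemma act_mul (M N : GL2Z) (x : P1Q) : act (M * N) x = act M (act N x) := by
  have h : (glq (M * N)).val.mulVecLin = (glq M).val.mulVecLin ∘ₗ (glq N).val.mulVecLin := by
    rw [glq, map_mul, Units.val_mul, Matrix.mulVecLin_mul]; rfl
  simp only [act, h]
  exact congrFun (Projectivization.map_comp _ _ _ _ _) x

lemma act_mk (M : GL2Z) (v : Fin 2 → ℚ) (hv : v ≠ 0) :
    act M (Projectivization.mk ℚ v hv) = Projectivization.mk ℚ ((glq M).val *ᵥ v)
      (fun h => hv (glq_inj M (by simpa using h))) :=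
  Projectivization.map_mk _ _ _ _

lemma act_ratPt (M : GL2Z) (t : ℚ) (ht : (M.val 1 0 : ℚ) * t + M.val 1 1 ≠ 0) :
    act M (ratPt t) =
      ratPt ((M.val 0 0 * t + M.val 0 1) / (M.val 1 0 * t + M.val 1 1)) := by
  rw [ratPt, act_mk, ratPt, Projectivization.mk_eq_mk_iff']
  refine ⟨M.val 1 0 * t + M.val 1 1, ?_⟩
  ext i; fin_cases i
  · simpa [Matrix.mulVec, dotProduct, Fin.sum_univ_two] using mul_div_cancel₀ _ ht
  · simp [Matrix.mulVec, dotProduct, Fin.sum_univ_two]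

lemma ratPt_injective : Function.Injective ratPt := by
  intro x y h
  obtain ⟨c, hc⟩ := (Projectivization.mk_eq_mk_iff' ℚ _ _ _ _).1 h
  have hc1 : c = 1 := by simpa using congrFun hc 1
  simpa [hc1] using (congrFun hc 0).symm

def Smat : GL2Z :=
  ⟨!![0, 1; 1, 0], !![0, 1; 1, 0], by decide, by decide⟩

lemma Fmat_mul_Smat (t : ℤ) : Fmat t * Smat = Smat * Emat t := by
  ext i j; fin_cases i <;> fin_cases j <;> simp [Fmat, Emat, Smat]

lemma Emat_mul_Smat (t : ℤ) : Emat t * Smat = Smat * Fmat t := by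
  ext i j; fin_cases i <;> fin_cases j <;> simp [Fmat, Emat, Smat]

lemma cfMatAux_not_mul_Smat (l : List ℤ) (b : Bool) :
    cfMatAux (!b) l * Smat = Smat * cfMatAux b l := by
  induction l generalizing b with
  | nil => simp [cfMatAux]
  | cons t l ih =>
    cases b
    · simp only [Bool.not_false, cfMatAux]
      rw [mul_assoc, show cfMatAux false l * Smat = _ from ih true, ← mul_assoc,
        Emat_mul_Smat, mul_assoc]
    · simp only [Bool.not_true, cfMatAux]
      rw [mul_assoc, show cfMatAux true l * Smat = _ from ih false, ← mul_assoc,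
        Fmat_mul_Smat, mul_assoc]

lemma act_Smat_infty : act Smat infty = ratPt 0 := by
  rw [infty, act_mk, ratPt, Projectivization.mk_eq_mk_iff']
  exact ⟨1, by ext i; fin_cases i <;> simp [Smat, Matrix.mulVec, dotProduct, Fin.sum_univ_two]⟩

lemma act_Smat_ratPt_zero : act Smat (ratPt 0) = infty := by
  rw [ratPt, act_mk, infty, Projectivization.mk_eq_mk_iff']
  exact ⟨1, by ext i; fin_cases i <;> simp [Smat, Matrix.mulVec, dotProduct, Fin.sum_univ_two]⟩

lemma cfVal_nil : cfVal [] = ratPt 0 := by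
  simp [cfVal, cfMat, cfMatAux, act, glq, Projectivization.map_id]

lemma cfVal_cons (a : ℤ) (l : List ℤ) : cfVal (a :: l) = act (Emat a * Smat) (cfVal l) := by
  have hbase : (if Odd (a :: l).length then infty else ratPt 0) =
      act Smat (if Odd l.length then infty else ratPt 0) := by
    by_cases h : Odd l.length
    · simp [h, Nat.odd_add_one, act_Smat_infty]
    · simp [h, Nat.odd_add_one, act_Smat_ratPt_zero]
  have hmat : cfMat (a :: l) * Smat = Emat a * Smat * cfMat l := by
    rw [cfMat, cfMatAux, mul_assoc, ← Bool.not_true, cfMatAux_not_mul_Smat, ← mul_assoc]; rfl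
  rw [cfVal, cfVal, hbase, ← act_mul, hmat, act_mul]

lemma cfVal_cons_of_eq_ratPt {a : ℤ} {l : List ℤ} {t : ℚ} (hl : cfVal l = ratPt t)
    (ht : t + a ≠ 0) : cfVal (a :: l) = ratPt (t + a)⁻¹ := by
  have hM : (Emat a * Smat).val = !![0, 1; 1, a] := by
    ext i j; fin_cases i <;> fin_cases j <;> simp [Emat, Smat]
  rw [cfVal_cons, hl, act_ratPt _ _ (by simpa [hM] using ht)]
  simp [hM]

lemma Int.exists_abs_sub_two_mul_mul_le (p : ℤ) {q : ℤ} (hq : q ≠ 0) :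
    ∃ a : ℤ, |p - 2 * a * q| ≤ |q| := by
  have hm : 0 < 2 * q.natAbs := by omega
  obtain ⟨a, ha⟩ : 2 * q ∣ p - p.bmod (2 * q.natAbs) := by
    rw [← Int.natAbs_dvd, Int.natAbs_mul]
    exact Int.ModEq.dvd Int.bmod_emod
  have hlo := Int.le_bmod (x := p) hm
  have hhi := Int.bmod_lt (x := p) hm
  refine ⟨a, ?_⟩
  rw [show p - 2 * a * q = p.bmod (2 * q.natAbs) by linarith, abs_le, Int.abs_eq_natAbs]
  omega

lemma Int.abs_lt_abs_of_le_of_odd_add {r q : ℤ} (hle : |r| ≤ |q|) (hodd : Odd (r + q)) :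
    |r| < |q| := by
  refine hle.lt_of_ne fun h => ?_
  rcases abs_eq_abs.1 h with rfl | rfl <;> simp [← Int.not_even_iff_odd] at hodd

theorem exists_even_cf_of_coprime (q p : ℤ) (hqp : |q| < |p|) (hcop : Int.gcd q p = 1)
    (hodd : Odd (q + p)) :
    ∃ l : List ℤ, (∀ a ∈ l, a ≠ 0) ∧ cfVal (l.map fun x => 2 * x) = ratPt (q / p) ∧
      (Even l.length ↔ Odd p) := by
  induction h : p.natAbs using Nat.strong_induction_on generalizing q p with
  | _ n ih =>
  subst h
  by_cases hq : q = 0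
  · subst hq
    have hp : p.natAbs = 1 := by simpa using hcop
    refine ⟨[], by simp, by simp [cfVal_nil], ?_⟩
    simp [← Int.natAbs_odd, hp]
  obtain ⟨a, ha⟩ := Int.exists_abs_sub_two_mul_mul_le p hq
  set r := p - 2 * a * q with hr
  have hodd_rq : Odd (r + q) := by
    rw [show r + q = q + p - 2 * (a * q) by ring]
    exact hodd.sub_even (even_two_mul _)
  have hrq : |r| < |q| := Int.abs_lt_abs_of_le_of_odd_add ha hodd_rq
  have hcop_rq : Int.gcd r q = 1 := by
    rw [hr, sub_eq_add_neg, ← neg_mul, Int.gcd_add_mul_right_left, Int.gcd_comm, hcop]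
  have ha0 : a ≠ 0 := by
    rintro rfl
    simp only [hr, mul_zero, zero_mul, sub_zero] at hrq
    exact hqp.not_gt hrq
  have hlt : q.natAbs < p.natAbs := by
    rw [Int.abs_eq_natAbs, Int.abs_eq_natAbs] at hqp
    omega
  obtain ⟨l, hl0, hl, hlen⟩ := ih q.natAbs hlt r q hrq hcop_rq hodd_rq rfl
  have hpq : (r / q : ℚ) + (2 * a : ℤ) = p / q := by
    field_simp
    push_cast [hr]
    ring
  refine ⟨a :: l, List.forall_mem_cons.2 ⟨ha0, hl0⟩, ?_, ?_⟩
  · have hp : (p : ℚ) ≠ 0 := Int.cast_ne_zero.2 (abs_pos.1 ((abs_nonneg q).trans_lt hqp))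
    rw [List.map_cons, cfVal_cons_of_eq_ratPt hl (hpq ▸ div_ne_zero hp (by exact_mod_cast hq)),
      hpq, inv_div]
  · rw [List.length_cons, Nat.even_add_one, hlen, Int.not_odd_iff_even]
    rw [Int.odd_add] at hodd
    simp only [← Int.not_even_iff_odd] at hodd ⊢
    tauto

/-- **Even continued fraction expansions (Section 5.2).** If `q, p` are coprime,
`0 < q < p` and `q + p` is odd, then `q/p = [2a₁, 2a₂, …, 2a_m]` for some `m ≥ 1`
and nonzero integers `a₁, …, a_m`; moreover `m` can be chosen odd when `p` is even
and even when `p` is odd. -/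
theorem exists_even_continued_fraction (q p : ℤ) (hq : 0 < q) (hqp : q < p)
    (hcop : Int.gcd q p = 1) (hodd : Odd (q + p)) :
    ∃ l : List ℤ, l ≠ [] ∧ (∀ x ∈ l, x ≠ 0) ∧
      cfVal (l.map fun x => 2 * x) = ratPt ((q : ℚ) / (p : ℚ)) ∧
      (Even p → Odd l.length) ∧ (Odd p → Even l.length) := by
  obtain ⟨l, hl0, hl, hlen⟩ := exists_even_cf_of_coprime q p
    (by rwa [abs_of_pos hq, abs_of_pos (hq.trans hqp)]) hcop hodd
  refine ⟨l, ?_, hl0, hl, fun hp => ?_, hlen.2⟩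
  · rintro rfl
    rw [List.map_nil, cfVal_nil] at hl
    exact div_ne_zero (by exact_mod_cast hq.ne') (by exact_mod_cast (hq.trans hqp).ne')
      (ratPt_injective hl).symm
  · exact Nat.not_even_iff_odd.1 fun h => Int.not_odd_iff_even.2 hp (hlen.1 h)
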